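/- Let X be a prefix code over A. For any word u and letter a, the number of parses satisfies δ_X(ua) = δ_X(u) if ua ∈ A*X, and δ_X(ua) = δ_X(u) + 1 otherwise. -/

import Mathlib

namespace Paper

variable {A : Type*}

/-- A set of words is factorial if it contains all factors of its elements. -/
def Factorial (S : Set (List A)) : Prop := ∀ w ∈ S, ∀ u : List A, u <:+: w → u ∈ S

def Lext (S : Set (List A)) (w : List A) : Set A := {a | a :: w ∈ S}
def Rext (S : Set (List A)) (w : List A) : Set A := {a | w ++ [a] ∈ S}
def Eext (S : Set (List A)) (w : List A) : Set (A × A) := {p | p.1 :: (w ++ [p.2]) ∈ S}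

def ExtVertex (S : Set (List A)) (w : List A) :=
  {v : A ⊕ A // Sum.elim (fun a => a ∈ Lext S w) (fun b => b ∈ Rext S w) v}

/-- The extension graph of `w` in `S`. -/
def extGraph (S : Set (List A)) (w : List A) : SimpleGraph (ExtVertex S w) where
  Adj u v := (∃ a b, u.1 = Sum.inl a ∧ v.1 = Sum.inr b ∧ (a, b) ∈ Eext S w) ∨
             (∃ a b, u.1 = Sum.inr b ∧ v.1 = Sum.inl a ∧ (a, b) ∈ Eext S w)
  symm := by
    constructor
    rintro u v (⟨a, b, h1, h2, h3⟩ | ⟨a, b, h1, h2, h3⟩)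
    · exact Or.inr ⟨a, b, h2, h1, h3⟩
    · exact Or.inl ⟨a, b, h2, h1, h3⟩
  loopless := by
    constructor
    rintro u (⟨a, b, h1, h2, _⟩ | ⟨a, b, h1, h2, _⟩) <;> rw [h1] at h2 <;> simp at h2

def IsPrefixCode (X : Set (List A)) : Prop :=
  (∀ x ∈ X, x ≠ []) ∧ ∀ x ∈ X, ∀ y ∈ X, x <+: y → x = y

def IsSuffixCode (X : Set (List A)) : Prop :=
  (∀ x ∈ X, x ≠ []) ∧ ∀ x ∈ X, ∀ y ∈ X, x <:+ y → x = y

def IsBifixCode (X : Set (List A)) : Prop := IsPrefixCode X ∧ IsSuffixCode X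

/-- The submonoid `X*` generated by a set of words. -/
def starOf (X : Set (List A)) : Set (List A) :=
  {m | ∃ ls : List (List A), (∀ u ∈ ls, u ∈ X) ∧ m = ls.flatten}

/-- A parse of `w` with respect to `X` : `w = v ++ x ++ u`, `v` has no suffix in `X`,
`x ∈ X*`, `u` has no prefix in `X`. -/
def IsParse (X : Set (List A)) (w : List A) (p : List A × List A × List A) : Prop :=
  w = p.1 ++ p.2.1 ++ p.2.2 ∧ (∀ s, s <:+ p.1 → s ∉ X) ∧ p.2.1 ∈ starOf X ∧
    (∀ t, t <+: p.2.2 → t ∉ X)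

noncomputable def parseCount (X : Set (List A)) (w : List A) : ℕ :=
  {p : List A × List A × List A | IsParse X w p}.ncard

/-- `X` has `S`-degree `d`. -/
def SDegreeIs (S X : Set (List A)) (d : ℕ) : Prop :=
  (∀ w ∈ S, parseCount X w ≤ d) ∧ ∃ w ∈ S, parseCount X w = d

def IsSMaximalBifixCode (S X : Set (List A)) : Prop :=
  IsBifixCode X ∧ X ⊆ S ∧ ∀ Y : Set (List A), IsBifixCode Y → Y ⊆ S → X ⊆ Y → Y = X

def Recurrent (S : Set (List A)) : Prop :=
  Factorial S ∧ S ≠ {[]} ∧ S.Nonempty ∧ ∀ u ∈ S, ∀ w ∈ S, ∃ v, u ++ v ++ w ∈ S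

def UniformlyRecurrent (S : Set (List A)) : Prop :=
  Factorial S ∧ (∀ w ∈ S, ∃ a : A, w ++ [a] ∈ S) ∧
    ∀ u ∈ S, ∃ n : ℕ, ∀ w ∈ S, w.length = n → u <:+: w

/-- The element of the free group corresponding to a word. -/
def toFG (w : List A) : FreeGroup A := (w.map FreeGroup.of).prod

/-- `T` is a basis of the subgroup `H` of the free group on `A`. -/
def IsBasisOf (T : Set (FreeGroup A)) (H : Subgroup (FreeGroup A)) : Prop :=
  Function.Injective (FreeGroup.lift (Subtype.val : T → FreeGroup A)) ∧
  (FreeGroup.lift (Subtype.val : T → FreeGroup A)).range = H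

/-!
For a prefix code `X`, a parse `(v, x, t)` of `w` is determined by its first component `v`:
the remainder `x ++ t` splits in exactly one way into a word of `X*` followed by a word with no
prefix in `X` (peel off the unique prefix in `X` while there is one). Hence `δ_X(w)` is the number
of prefixes of `w` with no suffix in `X`. The prefixes of `u a` are those of `u` together with
`u a` itself, which has no suffix in `X` exactly when `u a ∉ A* X`.
-/

variable {X : Set (List A)}

lemma nil_mem_starOf : ([] : List A) ∈ starOf X :=
  ⟨[], by simp, rfl⟩

lemma append_mem_starOf {y x : List A} (hy : y ∈ X) (hx : x ∈ starOf X) :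
    y ++ x ∈ starOf X := by
  obtain ⟨ls, hls, rfl⟩ := hx
  exact ⟨y :: ls, by simpa using ⟨hy, hls⟩, by simp⟩

theorem IsPrefixCode.exists_starOf_append (hX : IsPrefixCode X) (r : List A) :
    ∃ x ∈ starOf X, ∃ t, r = x ++ t ∧ ∀ s, s <+: t → s ∉ X := by
  induction hn : r.length using Nat.strong_induction_on generalizing r with
  | _ n ih =>
  by_cases hpre : ∃ y ∈ X, y <+: r
  · obtain ⟨y, hy, r', rfl⟩ := hpre
    have hlt : r'.length < n := by
      have := List.length_pos_iff.mpr (hX.1 y hy)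
      simp only [List.length_append] at hn
      omega
    obtain ⟨x, hx, t, rfl, ht⟩ := ih _ hlt r' rfl
    exact ⟨y ++ x, append_mem_starOf hy hx, t, by simp, ht⟩
  · push Not at hpre
    exact ⟨[], nil_mem_starOf, r, rfl, fun s hs hsX => hpre s hsX hs⟩

theorem IsPrefixCode.eq_of_starOf_append_eq (hX : IsPrefixCode X) {x₁ x₂ t₁ t₂ : List A}
    (hx₁ : x₁ ∈ starOf X) (hx₂ : x₂ ∈ starOf X)
    (ht₁ : ∀ s, s <+: t₁ → s ∉ X) (ht₂ : ∀ s, s <+: t₂ → s ∉ X)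
    (h : x₁ ++ t₁ = x₂ ++ t₂) : x₁ = x₂ := by
  obtain ⟨ls₁, hls₁, rfl⟩ := hx₁
  obtain ⟨ls₂, hls₂, rfl⟩ := hx₂
  induction ls₁ generalizing ls₂ with
  | nil =>
    cases ls₂ with
    | nil => rfl
    | cons y ls₂ =>
      exact (ht₁ y ⟨ls₂.flatten ++ t₂, by simpa using h.symm⟩ (hls₂ y (by simp))).elim
  | cons y₁ ls₁ ih =>
    cases ls₂ with
    | nil =>
      exact (ht₂ y₁ ⟨ls₁.flatten ++ t₁, by simpa using h⟩ (hls₁ y₁ (by simp))).elim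
    | cons y₂ ls₂ =>
      have hy₁ : y₁ ∈ X := hls₁ y₁ (by simp)
      have hy₂ : y₂ ∈ X := hls₂ y₂ (by simp)
      simp only [List.flatten_cons, List.append_assoc] at h ⊢
      have hy : y₁ = y₂ := by
        rcases List.prefix_or_prefix_of_prefix (List.prefix_append y₁ _)
            (h ▸ List.prefix_append y₂ _) with hle | hle
        · exact hX.2 y₁ hy₁ y₂ hy₂ hle
        · exact (hX.2 y₂ hy₂ y₁ hy₁ hle).symm
      subst hy
      rw [ih (fun y hy => hls₁ y (by simp [hy])) ls₂ (fun y hy => hls₂ y (by simp [hy]))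
        (by simpa using List.append_cancel_left h)]

theorem IsPrefixCode.injOn_fst_parses (hX : IsPrefixCode X) (w : List A) :
    Set.InjOn Prod.fst {p | IsParse X w p} := by
  rintro ⟨v, x₁, t₁⟩ ⟨hw₁, -, hx₁, ht₁⟩ ⟨v', x₂, t₂⟩ ⟨hw₂, -, hx₂, ht₂⟩ (rfl : v = v')
  have h : x₁ ++ t₁ = x₂ ++ t₂ := by
    simpa only [List.append_assoc, List.append_cancel_left_eq] using hw₁.symm.trans hw₂
  obtain rfl := hX.eq_of_starOf_append_eq hx₁ hx₂ ht₁ ht₂ h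
  obtain rfl := List.append_cancel_left h
  rfl

theorem IsPrefixCode.image_fst_parses (hX : IsPrefixCode X) (w : List A) :
    Prod.fst '' {p | IsParse X w p} = {v | v <+: w ∧ ∀ s, s <:+ v → s ∉ X} := by
  ext v
  constructor
  · rintro ⟨⟨v, x, t⟩, ⟨hw, hv, -, -⟩, rfl⟩
    exact ⟨⟨x ++ t, by simp [hw]⟩, hv⟩
  · rintro ⟨⟨r, rfl⟩, hv⟩
    obtain ⟨x, hx, t, rfl, ht⟩ := hX.exists_starOf_append r
    exact ⟨(v, x, t), ⟨by simp, hv, hx, ht⟩, rfl⟩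

theorem IsPrefixCode.parseCount_eq (hX : IsPrefixCode X) (w : List A) :
    parseCount X w = {v | v <+: w ∧ ∀ s, s <:+ v → s ∉ X}.ncard := by
  rw [← hX.image_fst_parses, (hX.injOn_fst_parses w).ncard_image, parseCount]

open Classical in
theorem ncard_prefixes_concat (P : List A → Prop) (w : List A) (a : A) :
    {v | v <+: w ++ [a] ∧ P v}.ncard =
      {v | v <+: w ∧ P v}.ncard + if P (w ++ [a]) then 1 else 0 := by
  have hfin : {v | v <+: w ∧ P v}.Finite :=
    (List.finite_toSet w.inits).subset fun v hv => (List.mem_inits v w).mpr hv.1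
  have hnot : w ++ [a] ∉ {v | v <+: w ∧ P v} := fun h => by
    simpa using h.1.length_le
  split_ifs with hP
  · rw [← Set.ncard_insert_of_notMem hnot hfin]
    congr 1
    ext v
    simp only [List.prefix_concat_iff, Set.mem_ofPred_eq, Set.mem_insert_iff]
    grind
  · congr 1
    ext v
    simp only [List.prefix_concat_iff, Set.mem_ofPred_eq]
    grind

open Classical in
theorem parse_count_extension {A : Type*} (X : Set (List A)) (hX : IsPrefixCode X)
    (u : List A) (a : A) :
    parseCount X (u ++ [a]) =
      if ∃ v x, x ∈ X ∧ u ++ [a] = v ++ x then parseCount X u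
      else parseCount X u + 1 := by
  have hsuffix : (∃ v x, x ∈ X ∧ u ++ [a] = v ++ x) ↔ ¬ ∀ s, s <:+ u ++ [a] → s ∉ X := by
    push Not
    exact ⟨fun ⟨v, x, hx, h⟩ => ⟨x, ⟨v, h.symm⟩, hx⟩, fun ⟨x, ⟨v, h⟩, hx⟩ => ⟨v, x, hx, h.symm⟩⟩
  rw [hX.parseCount_eq, hX.parseCount_eq, ncard_prefixes_concat, if_congr hsuffix rfl rfl]
  split_ifs <;> simp

end Paper
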